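/- Let X be a compact metric space with a countable basis and f₁,…,f_k continuous self-maps of X generating a minimal IFS. Let ℙ be the Bernoulli measure on Σ = {1,…,k}^ℕ with strictly positive weights. Then for every x ∈ X, for ℙ-almost every ω ∈ Σ the fiberwise orbit { f^n_ω(x) : n ≥ 1 } is dense in X (the probabilistic chaos game property). -/

import Mathlib

open MeasureTheory
open scoped ENNReal

/-- Apply the maps of an IFS along a finite word: `f_{w_n} ∘ ⋯ ∘ f_{w_1}`. -/
def applyWord {X : Type*} {k : ℕ} (f : Fin k → X → X) (w : List (Fin k)) (x : X) : X :=
  w.foldl (fun y i => f i y) x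

/-- The fiberwise iterate `f^n_ω(x) = f_{ω_n} ∘ ⋯ ∘ f_{ω_1}(x)` (0-indexed `ω`). -/
def fIter {X : Type*} {k : ℕ} (f : Fin k → X → X) (ω : ℕ → Fin k) (x : X) : ℕ → X
  | 0 => x
  | n + 1 => f (ω n) (fIter f ω x n)

/-!
Fix a nonempty open set `B`. Minimality and compactness give a single `N` such that from every
point some word of length at most `N` leads into `B`, and under a Bernoulli measure with positive
weights every such word has probability at least some `δ > 0`. So whatever the first `m * N`
letters are, the next `N` letters bring the orbit into `B` with conditional probability at least
`δ`, and the orbit avoids `B` up to time `m * N` with probability at most `(1 - δ) ^ m → 0`.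
Intersecting over a countable basis gives density.
-/

open Filter Set

section Cylinders

variable {α : Type*}

def prefixWord (ω : ℕ → α) (n : ℕ) : List α := List.ofFn fun i : Fin n => ω i

def wordCylinder (u : List α) : Set (ℕ → α) := {ω | prefixWord ω u.length = u}

@[simp]
lemma length_prefixWord (ω : ℕ → α) (n : ℕ) : (prefixWord ω n).length = n :=
  List.length_ofFn

lemma prefixWord_add (ω : ℕ → α) (m n : ℕ) :
    prefixWord ω (m + n) = prefixWord ω m ++ prefixWord (fun j => ω (m + j)) n := by
  simp [prefixWord, List.ofFn_add]

lemma take_prefixWord (ω : ℕ → α) {m n : ℕ} (h : n ≤ m) :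
    (prefixWord ω m).take n = prefixWord ω n := by
  obtain ⟨d, rfl⟩ := Nat.exists_eq_add_of_le h
  rw [prefixWord_add, List.take_left' (length_prefixWord ω n)]

lemma mem_wordCylinder_prefixWord_iff {ω ω' : ℕ → α} {n : ℕ} :
    ω' ∈ wordCylinder (prefixWord ω n) ↔ prefixWord ω' n = prefixWord ω n := by
  rw [wordCylinder, mem_ofPred_eq, length_prefixWord]

lemma mem_wordCylinder_iff {ω : ℕ → α} {u : List α} :
    ω ∈ wordCylinder u ↔ ∀ i : Fin u.length, ω i = u[i] := by
  simp [wordCylinder, prefixWord, List.ext_getElem_iff, Fin.forall_iff]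

lemma wordCylinder_append_subset (u w : List α) : wordCylinder (u ++ w) ⊆ wordCylinder u := by
  intro ω hω
  rw [wordCylinder, mem_ofPred_eq, List.length_append, prefixWord_add] at hω
  exact List.append_inj_left' hω (by simp)

lemma measurableSet_wordCylinder [MeasurableSpace α] [MeasurableSingletonClass α] (u : List α) :
    MeasurableSet (wordCylinder u) := by
  have : wordCylinder u = ⋂ i : Fin u.length, (fun ω : ℕ → α => ω i) ⁻¹' {u[i]} := by
    ext ω; simp [mem_wordCylinder_iff]
  rw [this]
  exact MeasurableSet.iInter fun i => measurable_pi_apply _ (measurableSet_singleton _)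

end Cylinders

section Dynamics

variable {X : Type*} {k : ℕ} (f : Fin k → X → X)

lemma applyWord_append (u w : List (Fin k)) (x : X) :
    applyWord f (u ++ w) x = applyWord f w (applyWord f u x) :=
  List.foldl_append

lemma continuous_applyWord [TopologicalSpace X] (hf : ∀ i, Continuous (f i)) (w : List (Fin k)) :
    Continuous (applyWord f w) := by
  induction w with
  | nil => exact continuous_id
  | cons a w ih => exact ih.comp (hf a)

lemma fIter_eq_applyWord (ω : ℕ → Fin k) (x : X) (n : ℕ) :
    fIter f ω x n = applyWord f (prefixWord ω n) x := by
  induction n with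
  | zero => rfl
  | succ n ih =>
    rw [prefixWord_add, applyWord_append, ← ih]
    rfl

lemma fIter_eq_of_prefixWord_eq {ω ω' : ℕ → Fin k} {M n : ℕ}
    (h : prefixWord ω M = prefixWord ω' M) (hn : n ≤ M) (x : X) :
    fIter f ω x n = fIter f ω' x n := by
  rw [fIter_eq_applyWord, fIter_eq_applyWord, ← take_prefixWord ω hn, ← take_prefixWord ω' hn, h]

lemma fIter_length_of_mem_wordCylinder {ω : ℕ → Fin k} {u : List (Fin k)}
    (h : ω ∈ wordCylinder u) (x : X) : fIter f ω x u.length = applyWord f u x := by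
  rw [fIter_eq_applyWord, h]

lemma exists_uniform_bound_hitting_word [TopologicalSpace X] [CompactSpace X]
    (hf : ∀ i, Continuous (f i))
    (hmin : ∀ x : X, Dense {y | ∃ w : List (Fin k), w ≠ [] ∧ y = applyWord f w x})
    {B : Set X} (hB : IsOpen B) (hBne : B.Nonempty) :
    ∃ N : ℕ, ∀ z : X, ∃ w : List (Fin k), w ≠ [] ∧ w.length ≤ N ∧ applyWord f w z ∈ B := by
  let U (N : ℕ) : Set X := ⋃ (w : List (Fin k)) (_ : w ≠ [] ∧ w.length ≤ N), applyWord f w ⁻¹' B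
  have hU_open (N : ℕ) : IsOpen (U N) :=
    isOpen_iUnion fun w => isOpen_iUnion fun _ => (continuous_applyWord f hf w).isOpen_preimage B hB
  have hU_mono : Monotone U := fun N N' hN =>
    biUnion_mono (fun w hw => ⟨hw.1, hw.2.trans hN⟩) fun _ _ => subset_rfl
  have hU_cover : univ ⊆ ⋃ N, U N := by
    intro z _
    obtain ⟨_, ⟨w, hw, rfl⟩, hwB⟩ := (hmin z).exists_mem_open hB hBne
    exact mem_iUnion.2 ⟨w.length, mem_biUnion ⟨hw, le_rfl⟩ hwB⟩
  obtain ⟨N, hN⟩ := isCompact_univ.elim_directed_cover U hU_open hU_cover hU_mono.directed_le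
  refine ⟨N, fun z => ?_⟩
  obtain ⟨w, ⟨hw, hwN⟩, hwB⟩ := mem_iUnion₂.1 (hN (mem_univ z))
  exact ⟨w, hw, hwN, hwB⟩

end Dynamics

section Bernoulli

variable {α : Type*} {p : α → ℝ≥0∞}

lemma exists_ne_zero_le_prod_map [Fintype α] (hp : ∀ a, 0 < p a) (hp_le : ∀ a, p a ≤ 1) (N : ℕ) :
    ∃ δ ≠ 0, ∀ w : List α, w.length ≤ N → δ ≤ (w.map p).prod := by
  set c := ∏ a, p a
  have hc_le (a : α) : c ≤ p a := by
    simpa using Finset.prod_le_prod_of_subset_of_le_one' (Finset.subset_univ {a})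
      fun b _ _ => hp_le b
  have hc_le_one : c ≤ 1 := Finset.prod_le_one' fun a _ => hp_le a
  refine ⟨c ^ N, pow_ne_zero _ (Finset.prod_ne_zero_iff.2 fun a _ => (hp a).ne'), fun w hw => ?_⟩
  calc c ^ N ≤ c ^ w.length := pow_le_pow_of_le_one zero_le hc_le_one hw
    _ = c ^ (w.map p).length := by rw [List.length_map]
    _ ≤ (w.map p).prod := List.pow_card_le_prod _ _ fun _ hb => by
        obtain ⟨a, _, rfl⟩ := List.mem_map.1 hb
        exact hc_le a

variable [MeasurableSpace α] {μ : Measure (ℕ → α)}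

def IsBernoulli (μ : Measure (ℕ → α)) (p : α → ℝ≥0∞) : Prop :=
  ∀ (n : ℕ) (w : Fin n → α), μ {ω | ∀ i : Fin n, ω i = w i} = ∏ i, p (w i)

lemma IsBernoulli.measure_wordCylinder (hμ : IsBernoulli μ p) (u : List α) :
    μ (wordCylinder u) = (u.map p).prod := by
  have : wordCylinder u = {ω | ∀ i : Fin u.length, ω i = u[i]} := by
    ext; exact mem_wordCylinder_iff
  rw [this, hμ]
  exact Fin.prod_univ_fun_getElem u p

lemma IsBernoulli.le_one [IsProbabilityMeasure μ] (hμ : IsBernoulli μ p) (a : α) : p a ≤ 1 := by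
  simpa using (hμ.measure_wordCylinder [a]).symm.trans_le prob_le_one

variable [MeasurableSingletonClass α] [IsFiniteMeasure μ]

lemma IsBernoulli.measure_inter_wordCylinder_le (hμ : IsBernoulli μ p) {A : Set (ℕ → α)}
    {u w : List α} {δ : ℝ≥0∞} (hδ : δ ≤ (w.map p).prod) (hA : Disjoint A (wordCylinder (u ++ w))) :
    μ (A ∩ wordCylinder u) ≤ (1 - δ) * μ (wordCylinder u) := by
  have hsub : A ∩ wordCylinder u ⊆ wordCylinder u \ wordCylinder (u ++ w) :=
    fun ω hω => ⟨hω.2, hA.notMem_of_mem_left hω.1⟩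
  calc μ (A ∩ wordCylinder u) ≤ μ (wordCylinder u \ wordCylinder (u ++ w)) := measure_mono hsub
    _ = μ (wordCylinder u) * (1 - (w.map p).prod) := by
        rw [measure_sdiff (wordCylinder_append_subset u w)
          (measurableSet_wordCylinder _).nullMeasurableSet (measure_ne_top μ _),
          ENNReal.mul_sub fun _ _ => measure_ne_top μ _, mul_one, hμ.measure_wordCylinder,
          hμ.measure_wordCylinder, List.map_append, List.prod_append]
    _ ≤ (1 - δ) * μ (wordCylinder u) := by
        rw [mul_comm]; gcongr

lemma IsBernoulli.measure_le_one_sub_mul [Fintype α] (hμ : IsBernoulli μ p) {M : ℕ} {δ : ℝ≥0∞}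
    {A A' : Set (ℕ → α)} (hA : ∀ ω ∈ A, wordCylinder (prefixWord ω M) ⊆ A) (hA' : A' ⊆ A)
    (hext : ∀ u : List α, u.length = M →
      ∃ w : List α, δ ≤ (w.map p).prod ∧ Disjoint A' (wordCylinder (u ++ w))) :
    μ A' ≤ (1 - δ) * μ A := by
  classical
  let P (v : Fin M → α) : Set (ℕ → α) := wordCylinder (List.ofFn v)
  have mem_P {ω : ℕ → α} {v : Fin M → α} : ω ∈ P v ↔ prefixWord ω M = List.ofFn v := by
    simp only [P, wordCylinder, mem_ofPred_eq, List.length_ofFn]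
  have hP_disj : Pairwise fun v v' => Disjoint (P v) (P v') := fun v v' hvv' =>
    Set.disjoint_left.2 fun ω hv hv' =>
      hvv' (List.ofFn_injective ((mem_P.1 hv).symm.trans (mem_P.1 hv')))
  let S := Finset.univ.filter fun v => P v ⊆ A
  have hA'_sub : A' ⊆ ⋃ v ∈ S, A' ∩ P v := by
    intro ω hω
    have hωP : ω ∈ P (fun i => ω i) := mem_P.2 rfl
    refine mem_biUnion (Finset.mem_filter.2 ⟨Finset.mem_univ _, ?_⟩) ⟨hω, hωP⟩
    exact hA ω (hA' hω)
  calc μ A' ≤ ∑ v ∈ S, μ (A' ∩ P v) := (measure_mono hA'_sub).trans (measure_biUnion_finset_le _ _)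
    _ ≤ ∑ v ∈ S, (1 - δ) * μ (P v) := Finset.sum_le_sum fun v _ => by
        obtain ⟨w, hδw, hw⟩ := hext (List.ofFn v) List.length_ofFn
        exact hμ.measure_inter_wordCylinder_le hδw hw
    _ = (1 - δ) * μ (⋃ v ∈ S, P v) := by
        rw [← Finset.mul_sum, measure_biUnion_finset (fun v _ v' _ h => hP_disj h)
          fun v _ => measurableSet_wordCylinder _]
    _ ≤ (1 - δ) * μ A := by
        gcongr
        exact iUnion₂_subset fun v hv => (Finset.mem_filter.1 hv).2

end Bernoulli

theorem ae_exists_fIter_mem {X : Type*} [TopologicalSpace X] [CompactSpace X] {k : ℕ}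
    (f : Fin k → X → X) (hf : ∀ i, Continuous (f i))
    (hmin : ∀ x : X, Dense {y | ∃ w : List (Fin k), w ≠ [] ∧ y = applyWord f w x})
    {μ : Measure (ℕ → Fin k)} [IsProbabilityMeasure μ] {p : Fin k → ℝ≥0∞} (hp : ∀ i, 0 < p i)
    (hμ : IsBernoulli μ p) (x : X) {B : Set X} (hB : IsOpen B) (hBne : B.Nonempty) :
    ∀ᵐ ω ∂μ, ∃ n, 1 ≤ n ∧ fIter f ω x n ∈ B := by
  obtain ⟨N, hW⟩ := exists_uniform_bound_hitting_word f hf hmin hB hBne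
  choose W hW_ne hW_len hW_mem using hW
  obtain ⟨δ, hδ, hδW⟩ := exists_ne_zero_le_prod_map hp hμ.le_one N
  let E (m : ℕ) : Set (ℕ → Fin k) := {ω | ∀ n, 1 ≤ n → n ≤ m * N → fIter f ω x n ∉ B}
  have hE_step (m : ℕ) : μ (E (m + 1)) ≤ (1 - δ) * μ (E m) := by
    refine hμ.measure_le_one_sub_mul (M := m * N) ?_ ?_ ?_
    · intro ω hω ω' hω' n h1 hn
      rw [fIter_eq_of_prefixWord_eq f (mem_wordCylinder_prefixWord_iff.1 hω') hn]
      exact hω n h1 hn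
    · exact fun ω hω n h1 hn => hω n h1 (hn.trans (Nat.mul_le_mul_right N m.le_succ))
    · intro u hu
      refine ⟨W (applyWord f u x), hδW _ (hW_len _), Set.disjoint_left.2 fun ω hω hωu => ?_⟩
      have hhit := fIter_length_of_mem_wordCylinder f hωu x
      rw [applyWord_append, List.length_append, hu] at hhit
      have hpos := List.length_pos_iff.2 (hW_ne (applyWord f u x))
      have hle := hW_len (applyWord f u x)
      exact hω _ (by omega) (by rw [Nat.succ_mul]; omega) (hhit ▸ hW_mem _)
  have hE (m : ℕ) : μ (E m) ≤ (1 - δ) ^ m := by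
    induction m with
    | zero => exact prob_le_one.trans_eq (pow_zero _).symm
    | succ m ih =>
      calc μ (E (m + 1)) ≤ (1 - δ) * μ (E m) := hE_step m
        _ ≤ (1 - δ) * (1 - δ) ^ m := by gcongr
        _ = (1 - δ) ^ (m + 1) := (pow_succ' _ _).symm
  have hδ_lt : 1 - δ < 1 := ENNReal.sub_lt_self ENNReal.one_ne_top one_ne_zero hδ
  rw [ae_iff, ← nonpos_iff_eq_zero]
  refine ge_of_tendsto' (ENNReal.tendsto_pow_atTop_nhds_zero_of_lt_one hδ_lt) fun m =>
    (measure_mono ?_).trans (hE m)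
  exact fun ω hω n h1 _ hn => hω ⟨n, h1, hn⟩

theorem stmt7_general {X : Type*} [MetricSpace X] [CompactSpace X] {k : ℕ}
    (f : Fin k → X → X) (hf : ∀ i, Continuous (f i))
    (hmin : ∀ x : X, Dense {y | ∃ w : List (Fin k), w ≠ [] ∧ y = applyWord f w x})
    (μ : Measure (ℕ → Fin k)) [IsProbabilityMeasure μ]
    (pw : Fin k → ℝ≥0∞) (hpos : ∀ i, 0 < pw i)
    (hcyl : ∀ (n : ℕ) (w : Fin n → Fin k),
      μ {ω | ∀ i : Fin n, ω i = w i} = ∏ i, pw (w i)) :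
    ∀ x : X, ∀ᵐ ω ∂μ, Dense {y | ∃ n : ℕ, 1 ≤ n ∧ fIter f ω x n = y} := by
  intro x
  have hb := TopologicalSpace.isBasis_countableBasis X
  have hae : ∀ᵐ ω ∂μ, ∀ o ∈ TopologicalSpace.countableBasis X, o.Nonempty →
      ∃ n, 1 ≤ n ∧ fIter f ω x n ∈ o := by
    rw [ae_ball_iff (TopologicalSpace.countable_countableBasis X)]
    intro o ho
    rcases o.eq_empty_or_nonempty with rfl | hne
    · exact Eventually.of_forall fun _ h => absurd h Set.not_nonempty_empty
    · filter_upwards [ae_exists_fIter_mem f hf hmin hpos hcyl x (hb.isOpen ho) hne] with ω h _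
        using h
  filter_upwards [hae] with ω hω
  refine hb.dense_iff.2 fun o ho hne => ?_
  obtain ⟨n, h1, hn⟩ := hω o ho hne
  exact ⟨_, hn, n, h1, rfl⟩

theorem stmt7 {X : Type*} [MetricSpace X] [CompactSpace X] {k : ℕ}
    (f : Fin k → X → X) (hf : ∀ i, Continuous (f i))
    (hmin : ∀ x : X, Dense {y | ∃ w : List (Fin k), w ≠ [] ∧ y = applyWord f w x})
    (μ : Measure (ℕ → Fin k)) [IsProbabilityMeasure μ]
    (pw : Fin k → ℝ≥0∞) (hpos : ∀ i, 0 < pw i) (hsum : ∑ i, pw i = 1)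
    (hcyl : ∀ (n : ℕ) (w : Fin n → Fin k),
      μ {ω | ∀ i : Fin n, ω i = w i} = ∏ i, pw (w i)) :
    ∀ x : X, ∀ᵐ ω ∂μ, Dense {y | ∃ n : ℕ, 1 ≤ n ∧ fIter f ω x n = y} :=
  stmt7_general f hf hmin μ pw hpos hcyl
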